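/- For w > 0 let g_w(x) = (1 + cos x − √((1 + cos x)² − 4·tanh²(w)·cos x))/(2·tanh w) and p_w(x) = arcosh((1 − g_w(x)·tanh w)/√(1 − tanh²w)). Then p_w is strictly monotonically increasing on the interval (0, π). -/

import Mathlib

/-!
Write `s = tanh² w` and `c = cos x`. Then `2 g_w(x) tanh w = N_s(c) := 1 + c - √D_s(c)` with
`D_s(c) = (1 + c)² - 4 s c = (1 + c - 2s)² + 4 s (1 - s)`. For `0 < s < 1` the second summand is
positive, so `√D_s` has slope less than one and `N_s` is strictly increasing. Hence
`(1 - N_s(cos x) / 2) / √(1 - s)` is strictly increasing on `[0, π]`; it equals `1` at `x = 0`,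
and `arcosh` is strictly increasing on `[1, ∞)`.
-/

noncomputable def arcosh (x : ℝ) : ℝ := Real.log (x + Real.sqrt (x ^ 2 - 1))

noncomputable def g (w x : ℝ) : ℝ :=
  (1 + Real.cos x -
      Real.sqrt ((1 + Real.cos x) ^ 2 - 4 * Real.tanh w ^ 2 * Real.cos x)) /
    (2 * Real.tanh w)

noncomputable def p (w x : ℝ) : ℝ :=
  arcosh ((1 - g w x * Real.tanh w) / Real.sqrt (1 - Real.tanh w ^ 2))

open Set

/-- The numerator of `g w x`, with `s = tanh² w` and `c = cos x`. -/
noncomputable def gNumerator (s c : ℝ) : ℝ :=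
  1 + c - Real.sqrt ((1 + c) ^ 2 - 4 * s * c)

lemma arcosh_eq_real_arcosh : arcosh = Real.arcosh := rfl

lemma tanh_ne_zero {w : ℝ} (hw : w ≠ 0) : Real.tanh w ≠ 0 := by
  rw [← Real.tanh_zero]
  exact Real.tanh_injective.ne hw

lemma tanh_sq_lt_one (w : ℝ) : Real.tanh w ^ 2 < 1 := by
  obtain ⟨hlo, hhi⟩ := Real.tanh_bijOn.mapsTo (mem_univ w)
  nlinarith

lemma g_mul_tanh {w : ℝ} (hw : Real.tanh w ≠ 0) (x : ℝ) :
    g w x * Real.tanh w = gNumerator (Real.tanh w ^ 2) (Real.cos x) / 2 := by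
  unfold g gNumerator
  field_simp

lemma gNumerator_one (s : ℝ) : gNumerator s 1 = 2 - 2 * Real.sqrt (1 - s) := by
  rw [gNumerator, show (1 + (1 : ℝ)) ^ 2 - 4 * s * 1 = 2 ^ 2 * (1 - s) by ring,
    Real.sqrt_mul (by norm_num), Real.sqrt_sq zero_le_two]
  ring

lemma strictMono_gNumerator {s : ℝ} (hs : s ∈ Ioo 0 1) : StrictMono (gNumerator s) := by
  intro c₁ c₂ hc
  set D₁ := (1 + c₁) ^ 2 - 4 * s * c₁
  set D₂ := (1 + c₂) ^ 2 - 4 * s * c₂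
  have hD₁ : (1 + c₁ - 2 * s) ^ 2 < D₁ := by
    have : D₁ = (1 + c₁ - 2 * s) ^ 2 + 4 * s * (1 - s) := by ring
    nlinarith [mul_pos hs.1 (sub_pos.2 hs.2)]
  have hsqrt₁ : 1 + c₁ - 2 * s < Real.sqrt D₁ := Real.lt_sqrt_of_sq_lt hD₁
  have hsq₁ : Real.sqrt D₁ ^ 2 = D₁ := Real.sq_sqrt ((sq_nonneg _).trans hD₁.le)
  -- `(√D₁ + (c₂ - c₁))² - D₂ = (c₂ - c₁) (2 (√D₁ - (1 + c₁ - 2 s)) + (c₂ - c₁)) > 0`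
  have hslope : Real.sqrt D₂ < Real.sqrt D₁ + (c₂ - c₁) := by
    rw [Real.sqrt_lt' (by positivity)]
    nlinarith [mul_pos (sub_pos.2 hc) (sub_pos.2 hsqrt₁)]
  simp only [gNumerator]
  linarith

theorem stmt_13 (w : ℝ) (hw : 0 < w) :
    StrictMonoOn (p w) (Set.Ioo 0 Real.pi) := by
  set t := Real.tanh w
  have ht : t ≠ 0 := tanh_ne_zero hw.ne'
  have hs : t ^ 2 ∈ Ioo 0 1 := ⟨by positivity, tanh_sq_lt_one w⟩
  have hroot : 0 < Real.sqrt (1 - t ^ 2) := Real.sqrt_pos.2 (sub_pos.2 hs.2)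
  set A : ℝ → ℝ := fun x ↦ (1 - gNumerator (t ^ 2) (Real.cos x) / 2) / Real.sqrt (1 - t ^ 2)
  have hpA : p w = arcosh ∘ A := by
    funext x
    rw [Function.comp_apply, p, g_mul_tanh ht]
  have hA : StrictMonoOn A (Icc 0 Real.pi) := fun x hx y hy hxy ↦ by
    have hnum : gNumerator (t ^ 2) (Real.cos y) < gNumerator (t ^ 2) (Real.cos x) :=
      strictMono_gNumerator hs (Real.strictAntiOn_cos hx hy hxy)
    exact div_lt_div_of_pos_right (by linarith) hroot
  have hA0 : A 0 = 1 := by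
    simp only [A, Real.cos_zero, gNumerator_one]
    field_simp
    ring
  rw [hpA, arcosh_eq_real_arcosh]
  refine Real.strictMonoOn_arcosh.comp (hA.mono Ioo_subset_Icc_self) fun x hx ↦ ?_
  have hA0x : A 0 ≤ A x :=
    hA.monotoneOn (left_mem_Icc.2 Real.pi_pos.le) (Ioo_subset_Icc_self hx) hx.1.le
  show 0 < A x
  linarith
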